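/- arXiv:1908.11604 — 2 statements merged into one kernel-verified Lean document; each statement's English description precedes it below -/
import Mathlib

section
/- The interior rest point x* = 1 - c(1-α)/(α(m-n)) of the replicator dynamics ẋ = x(1-x)[α(m-n)(1-x) - c(1-α)] is asymptotically stable: the derivative of the right-hand side at x* is strictly negative. -/
/-! At a rest point `x*` of `ẋ = x(1-x) g(x)` with `g(x*) = 0`, the product rule leaves only
`x*(1-x*) g'(x*)`. For the linear payoff gap `g(x) = A(1-x) - K` with `A = α(m-n)` and
`K = c(1-α)` we have `g' = -A < 0`, and `0 < K < A` places `x* = 1 - K/A` strictly inside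
`(0,1)`, so this derivative is negative. -/

theorem HasDerivAt.replicator_of_eq_zero {g : ℝ → ℝ} {g' x : ℝ} (hg : HasDerivAt g g' x)
    (hgx : g x = 0) : HasDerivAt (fun y => y * (1 - y) * g y) (x * (1 - x) * g') x := by
  have hprod := ((hasDerivAt_id' x).fun_mul ((hasDerivAt_id' x).const_sub 1)).fun_mul hg
  rwa [hgx, mul_zero, zero_add] at hprod

theorem deriv_replicator_neg_of_eq_zero {g : ℝ → ℝ} {g' x : ℝ} (hg : HasDerivAt g g' x)
    (hgx : g x = 0) (hx : x ∈ Set.Ioo (0 : ℝ) 1) (hg' : g' < 0) :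
    deriv (fun y => y * (1 - y) * g y) x < 0 := by
  rw [(hg.replicator_of_eq_zero hgx).deriv]
  exact mul_neg_of_pos_of_neg (mul_pos hx.1 (sub_pos.2 hx.2)) hg'

theorem hasDerivAt_linearGap (A K x : ℝ) :
    HasDerivAt (fun y : ℝ => A * (1 - y) - K) (-A) x := by
  simpa using (((hasDerivAt_id x).const_sub 1).const_mul A).sub_const K

section LinearGap

variable {A K : ℝ}

theorem linearGap_root (hA : A ≠ 0) : A * (1 - (1 - K / A)) - K = 0 := by
  field_simp
  ring

theorem linearGap_root_mem_Ioo (hK : 0 < K) (hKA : K < A) : 1 - K / A ∈ Set.Ioo (0 : ℝ) 1 := by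
  have hA : 0 < A := hK.trans hKA
  constructor
  · linarith [(div_lt_one hA).2 hKA]
  · linarith [div_pos hK hA]

end LinearGap

theorem replicator_interior_stable_general (α m n c : ℝ) (hα : α ∈ Set.Ioo (0:ℝ) 1)
    (hmn : m > n) (hc : c > 0)
    (hbound : c < (m - n) * α / (1 - α))
    (xs : ℝ) (hxs : xs = 1 - c * (1 - α) / (α * (m - n))) :
    deriv (fun x : ℝ => x * (1 - x) * (α * (m - n) * (1 - x) - c * (1 - α))) xs < 0 := by
  obtain ⟨hα0, hα1⟩ := hα
  have hA : 0 < α * (m - n) := mul_pos hα0 (sub_pos.2 hmn)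
  have hK : 0 < c * (1 - α) := mul_pos hc (sub_pos.2 hα1)
  have hKA : c * (1 - α) < α * (m - n) := by
    linarith [(lt_div_iff₀ (sub_pos.2 hα1)).1 hbound]
  subst hxs
  exact deriv_replicator_neg_of_eq_zero (hasDerivAt_linearGap _ _ _) (linearGap_root hA.ne')
    (linearGap_root_mem_Ioo hK hKA) (neg_neg_of_pos hA)

theorem replicator_interior_stable (α m n c : ℝ) (hα : α ∈ Set.Ioo (0:ℝ) 1)
    (hmn : m > n) (hnc : n > c) (hc : c > 0)
    (hbound : c < (m - n) * α / (1 - α))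
    (xs : ℝ) (hxs : xs = 1 - c * (1 - α) / (α * (m - n))) :
    deriv (fun x : ℝ => x * (1 - x) * (α * (m - n) * (1 - x) - c * (1 - α))) xs < 0 :=
  replicator_interior_stable_general α m n c hα hmn hc hbound xs hxs
end

section
/- The probability that a random match of two bilinguals results in language B being spoken, given each plays R independently with probability x*, equals 2x* - x*², and as a function of α (with x* = x*(α) = 1 - (1-α)c/(α(m-n))) the quantity E[KE] = α²(2x*(α) - x*(α)²) is strictly increasing in α on (c/(m-n+c), 1). -/
/-! Since `2x - x² = 1 - (1 - x)²` and `1 - x*(α) = (1 - α) k / α` with `k = c / (m - n)`,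
the expected street use simplifies to `α² - k² (1 - α)²`. On `[0, 1]` the first term strictly
increases and the second decreases, because `1 - α` is nonnegative and decreasing there. -/

theorem sq_mul_two_mul_one_sub_div_sub_sq {α : ℝ} (hα : α ≠ 0) (c d : ℝ) :
    α ^ 2 * (2 * (1 - (1 - α) * c / (α * d)) - (1 - (1 - α) * c / (α * d)) ^ 2)
      = α ^ 2 - (c / d) ^ 2 * (1 - α) ^ 2 := by
  field_simp
  ring

theorem strictMonoOn_sq_sub_mul_one_sub_sq {k : ℝ} (hk : 0 ≤ k) :
    StrictMonoOn (fun α : ℝ => α ^ 2 - k * (1 - α) ^ 2) (Set.Icc 0 1) := by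
  intro a ⟨ha0, _⟩ b ⟨_, hb1⟩ hab
  have hsq : a ^ 2 < b ^ 2 := pow_lt_pow_left₀ hab ha0 two_ne_zero
  have hsq_one_sub : (1 - b) ^ 2 ≤ (1 - a) ^ 2 :=
    pow_le_pow_left₀ (by linarith) (by linarith) 2
  have := mul_le_mul_of_nonneg_left hsq_one_sub hk
  simp only
  linarith

theorem expected_KE_strictMono_general (m n c : ℝ) (hmn : m > n) (hc : c > 0) :
    (∀ α x : ℝ, α ^ 2 * (x ^ 2) + 2 * (α ^ 2) * x * (1 - x) = α ^ 2 * (2 * x - x ^ 2)) ∧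
    StrictMonoOn
      (fun α : ℝ =>
        α ^ 2 * (2 * (1 - (1 - α) * c / (α * (m - n)))
          - (1 - (1 - α) * c / (α * (m - n))) ^ 2))
      (Set.Ioo (c / (m - n + c)) 1) := by
  refine ⟨fun α x => by ring, ?_⟩
  have hlower : 0 ≤ c / (m - n + c) := div_nonneg hc.le (by linarith)
  have hsub : Set.Ioo (c / (m - n + c)) 1 ⊆ Set.Icc 0 1 := fun α hα =>
    ⟨hlower.trans hα.1.le, hα.2.le⟩
  refine ((strictMonoOn_sq_sub_mul_one_sub_sq (sq_nonneg (c / (m - n)))).mono hsub).congr ?_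
  intro α hα
  exact (sq_mul_two_mul_one_sub_div_sub_sq (hlower.trans_lt hα.1).ne' c (m - n)).symm

theorem expected_KE_strictMono (m n c : ℝ) (hmn : m > n) (hnc : n > c) (hc : c > 0) :
    (∀ α x : ℝ, α ^ 2 * (x ^ 2) + 2 * (α ^ 2) * x * (1 - x) = α ^ 2 * (2 * x - x ^ 2)) ∧
    StrictMonoOn
      (fun α : ℝ =>
        α ^ 2 * (2 * (1 - (1 - α) * c / (α * (m - n)))
          - (1 - (1 - α) * c / (α * (m - n))) ^ 2))
      (Set.Ioo (c / (m - n + c)) 1) :=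
  expected_KE_strictMono_general m n c hmn hc
end
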